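/- Let x_1,…,x_n ∈ ℝ^d with ‖x_i‖ ≤ 1, labels y_i ∈ {±1}, and suppose (1/n)‖X‖² ≤ σ² where X = [x_1,…,x_n]. For any w ∈ ℝ^d define ∇L̂_A(w) = -(1/b) ∑_{i∈A} χ_i(w) y_i x_i where χ_i(w) = 1 if y_i⟨w, x_i⟩ < 1 and 0 otherwise. Then for A a uniformly random b-subset of {1,…,n}, E[‖∇L̂_A(w)‖²] ≤ β_b / b, where β_b = 1 + (b-1)(nσ²-1)/(n-1). -/

import Mathlib

/-!
If `A` is a uniformly random `b`-subset of an `n`-set, an index lies in `A` with probability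
`b / n` and a pair of distinct indices with probability `b (b - 1) / (n (n - 1))`. Expanding
`‖∑ i ∈ A, v i‖²` into inner products therefore gives
`E ‖∑ i ∈ A, v i‖² = (b (b - 1) ‖∑ i, v i‖² + b (n - b) ∑ i, ‖v i‖²) / (n (n - 1))`.
For `v i = χ_i(w) y_i x_i` we have `‖v i‖ ≤ 1`, and `∑ i, v i = X c` with `|c i| ≤ 1`, so
`‖∑ i, v i‖² ≤ ‖X‖² n ≤ n² σ²`; substituting both bounds gives `β_b / b`.
-/

open Finset

theorem Finset.card_filter_powersetCard_subset_mul_choose {α : Type*} [DecidableEq α]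
    (s t : Finset α) (b : ℕ) (hst : s ⊆ t) :
    #((t.powersetCard b).filter (s ⊆ ·)) * (#t).choose #s = (#t).choose b * b.choose #s := by
  by_cases hsb : #s ≤ b
  · rw [card_filter_powersetCard_subset s t b hst hsb, Nat.choose_mul hsb, mul_comm]
  · rw [Nat.choose_eq_zero_of_lt (not_le.mp hsb), mul_zero, mul_eq_zero, card_eq_zero,
      filter_eq_empty_iff]
    left
    intro A hA hsA
    exact hsb ((card_le_card hsA).trans (mem_powersetCard.mp hA).2.le)

variable {ι E : Type*} [NormedAddCommGroup E] [InnerProductSpace ℝ E]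

theorem Finset.card_filter_powersetCard_mem_mem_mul [Fintype ι] [DecidableEq ι]
    (b : ℕ) (i j : ι) :
    (#((univ.powersetCard b).filter fun A : Finset ι => i ∈ A ∧ j ∈ A) : ℝ)
        * (Fintype.card ι * (Fintype.card ι - 1))
      = (Fintype.card ι).choose b
        * ((b : ℝ) * (b - 1) + if i = j then (b : ℝ) * (Fintype.card ι - b) else 0) := by
  obtain rfl | hij := eq_or_ne i j
  · have h := card_filter_powersetCard_subset_mul_choose {i} univ b (subset_univ _)
    simp only [card_singleton, Nat.choose_one_right, singleton_subset_iff] at h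
    simp only [and_self, if_true]
    have h' : (#((univ.powersetCard b).filter fun A : Finset ι => i ∈ A) : ℝ)
        * Fintype.card ι = (Fintype.card ι).choose b * b := by exact_mod_cast h
    linear_combination (↑(Fintype.card ι) - 1 : ℝ) * h'
  · have h := card_filter_powersetCard_subset_mul_choose {i, j} univ b (subset_univ _)
    simp only [card_pair hij, insert_subset_iff, singleton_subset_iff, card_univ] at h
    have h' := congrArg (fun k : ℕ => (k : ℝ)) h
    simp only [Nat.cast_mul, Nat.cast_choose_two] at h'
    simp only [hij, if_false]
    linear_combination 2 * h'

theorem norm_sum_sq_eq_sum_sum_inner (s : Finset ι) (v : ι → E) :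
    ‖∑ i ∈ s, v i‖ ^ 2 = ∑ i ∈ s, ∑ j ∈ s, inner ℝ (v i) (v j) := by
  rw [← real_inner_self_eq_norm_sq, sum_inner]
  simp only [inner_sum]

theorem sum_norm_sum_sq_eq_sum_card_mul_inner [Fintype ι] [DecidableEq ι]
    (𝒜 : Finset (Finset ι)) (v : ι → E) :
    ∑ A ∈ 𝒜, ‖∑ i ∈ A, v i‖ ^ 2
      = ∑ i, ∑ j, (#(𝒜.filter fun A => i ∈ A ∧ j ∈ A) : ℝ) * inner ℝ (v i) (v j) := by
  have hA : ∀ A : Finset ι, ‖∑ i ∈ A, v i‖ ^ 2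
      = ∑ i, ∑ j, if i ∈ A ∧ j ∈ A then inner ℝ (v i) (v j) else 0 := by
    intro A
    simp [norm_sum_sq_eq_sum_sum_inner, ite_and]
  simp only [hA]
  rw [sum_comm]
  refine sum_congr rfl fun i _ => ?_
  rw [sum_comm]
  refine sum_congr rfl fun j _ => ?_
  rw [← sum_filter, sum_const, nsmul_eq_mul]

-- Cleared of the denominator `n (n - 1)`, the identity needs no hypothesis on `b` or `n`.
theorem sum_powersetCard_norm_sum_sq_mul [Fintype ι] [DecidableEq ι] (b : ℕ) (v : ι → E) :
    (∑ A ∈ univ.powersetCard b, ‖∑ i ∈ A, v i‖ ^ 2)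
        * (Fintype.card ι * (Fintype.card ι - 1))
      = (Fintype.card ι).choose b * ((b : ℝ) * (b - 1) * ‖∑ i, v i‖ ^ 2
          + (b : ℝ) * (Fintype.card ι - b) * ∑ i, ‖v i‖ ^ 2) := by
  set n := Fintype.card ι
  have hcount : ∀ i j, (#((univ.powersetCard b).filter fun A : Finset ι => i ∈ A ∧ j ∈ A) : ℝ)
      * inner ℝ (v i) (v j) * (n * (n - 1))
      = n.choose b * ((b : ℝ) * (b - 1) * inner ℝ (v i) (v j)
          + if i = j then (b : ℝ) * (n - b) * inner ℝ (v i) (v j) else 0) := by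
    intro i j
    rw [mul_right_comm, card_filter_powersetCard_mem_mem_mul]
    split_ifs <;> ring
  rw [sum_norm_sum_sq_eq_sum_card_mul_inner, norm_sum_sq_eq_sum_sum_inner]
  simp only [sum_mul, hcount, ← mul_sum, sum_add_distrib, sum_ite_eq, mem_univ, if_true,
    real_inner_self_eq_norm_sq]

theorem Matrix.toEuclideanLin_toLp_eq_sum_smul {m n : Type*} [Fintype m] [Fintype n]
    [DecidableEq n] (X : Matrix m n ℝ) (x : n → EuclideanSpace ℝ m)
    (hX : ∀ i j, X j i = x i j) (c : n → ℝ) :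
    Matrix.toEuclideanLin X (WithLp.toLp 2 c) = ∑ i, c i • x i := by
  ext j
  simp [Matrix.mulVec, dotProduct, hX, mul_comm]

theorem norm_sum_smul_sq_le_opNorm_sq_mul_card {m n : Type*} [Fintype m] [Fintype n]
    [DecidableEq n] (X : Matrix m n ℝ) (x : n → EuclideanSpace ℝ m)
    (hX : ∀ i j, X j i = x i j) (c : n → ℝ) (hc : ∀ i, |c i| ≤ 1) :
    ‖∑ i, c i • x i‖ ^ 2
      ≤ ‖LinearMap.toContinuousLinearMap (Matrix.toEuclideanLin X)‖ ^ 2 * Fintype.card n := by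
  set T := LinearMap.toContinuousLinearMap (Matrix.toEuclideanLin X)
  have hc2 : ‖(WithLp.toLp 2 c : EuclideanSpace ℝ n)‖ ^ 2 ≤ Fintype.card n := by
    rw [EuclideanSpace.real_norm_sq_eq]
    simpa using sum_le_sum fun i (_ : i ∈ univ) => (sq_le_one_iff_abs_le_one (c i)).mpr (hc i)
  calc ‖∑ i, c i • x i‖ ^ 2 = ‖T (WithLp.toLp 2 c)‖ ^ 2 := by
        rw [← X.toEuclideanLin_toLp_eq_sum_smul x hX]; rfl
    _ ≤ (‖T‖ * ‖(WithLp.toLp 2 c : EuclideanSpace ℝ n)‖) ^ 2 := by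
        gcongr; exact T.le_opNorm _
    _ ≤ ‖T‖ ^ 2 * Fintype.card n := by rw [mul_pow]; gcongr

theorem stmt2_general (n b d : ℕ) (hn : 2 ≤ n) (hb1 : 1 ≤ b) (hbn : b ≤ n)
    (x : Fin n → EuclideanSpace ℝ (Fin d)) (y : Fin n → ℝ)
    (hy : ∀ i, y i = 1 ∨ y i = -1) (hx : ∀ i, ‖x i‖ ≤ 1)
    (X : Matrix (Fin d) (Fin n) ℝ) (hX : ∀ i j, X j i = x i j)
    (σ2 : ℝ)
    (hspec : (1 / (n : ℝ)) *
        ‖LinearMap.toContinuousLinearMap (Matrix.toEuclideanLin X)‖ ^ 2 ≤ σ2)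
    (w : EuclideanSpace ℝ (Fin d)) :
    (∑ A ∈ Finset.powersetCard b (Finset.univ : Finset (Fin n)),
        ‖(-(1 / (b : ℝ))) • ∑ i ∈ A,
            (if y i * (inner ℝ w (x i) : ℝ) < 1 then (1 : ℝ) else 0) • (y i • x i)‖ ^ 2)
      / (n.choose b : ℝ)
    ≤ (1 + ((b : ℝ) - 1) * ((n : ℝ) * σ2 - 1) / ((n : ℝ) - 1)) / (b : ℝ) := by
  set c : Fin n → ℝ := fun i => (if y i * inner ℝ w (x i) < 1 then 1 else 0) * y i
  have hc : ∀ i, |c i| ≤ 1 := fun i => by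
    rcases hy i with h | h <;> simp only [c, h] <;> split_ifs <;> norm_num
  have hsummand : ∀ A : Finset (Fin n), ‖(-(1 / (b : ℝ))) • ∑ i ∈ A,
      (if y i * (inner ℝ w (x i) : ℝ) < 1 then (1 : ℝ) else 0) • (y i • x i)‖ ^ 2
        = (1 / b) ^ 2 * ‖∑ i ∈ A, c i • x i‖ ^ 2 := fun A => by
    simp only [norm_smul, mul_pow, norm_neg, smul_smul, c, Real.norm_eq_abs,
      abs_of_nonneg (by positivity : (0 : ℝ) ≤ 1 / b)]
  have hdiag : ∑ i, ‖c i • x i‖ ^ 2 ≤ n := by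
    have hle : ∀ i, ‖c i • x i‖ ≤ 1 := fun i => by
      rw [norm_smul, Real.norm_eq_abs]; exact mul_le_one₀ (hc i) (norm_nonneg _) (hx i)
    simpa using sum_le_sum fun i (_ : i ∈ univ) => (sq_le_one_iff₀ (norm_nonneg _)).mpr (hle i)
  have hn0 : (0 : ℝ) < n := by positivity
  have hn1 : (0 : ℝ) < n - 1 := by
    have : (2 : ℝ) ≤ n := by exact_mod_cast hn
    linarith
  have hC : (0 : ℝ) < n.choose b := by exact_mod_cast Nat.choose_pos hbn
  have hcross : ‖∑ i, c i • x i‖ ^ 2 ≤ n * σ2 * n := by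
    have hT := norm_sum_smul_sq_le_opNorm_sq_mul_card X x hX c hc
    rw [one_div, inv_mul_le_iff₀ hn0] at hspec
    rw [Fintype.card_fin] at hT
    exact hT.trans (by gcongr)
  have hmoment := sum_powersetCard_norm_sum_sq_mul b fun i => c i • x i
  rw [Fintype.card_fin] at hmoment
  rw [sum_congr rfl fun A _ => hsummand A, ← mul_sum,
    eq_div_of_mul_eq (by positivity) hmoment]
  calc _ = ((b - 1) * ‖∑ i, c i • x i‖ ^ 2 + (n - b) * ∑ i, ‖c i • x i‖ ^ 2)
        / (b * (n * (n - 1))) := by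
        field_simp
    _ ≤ ((b - 1) * (n * σ2 * n) + (n - b) * n) / (b * (n * (n - 1))) := by
        have hb_one : (1 : ℝ) ≤ b := by exact_mod_cast hb1
        have hb_le : (b : ℝ) ≤ n := by exact_mod_cast hbn
        gcongr
    _ = _ := by
        field_simp
        ring

/-- Lemma 2: for data with `‖x_i‖ ≤ 1` and `(1/n)‖X‖² ≤ σ²` (spectral norm of the
data matrix), the expected squared norm of the mini-batch subgradient of the
hinge loss is at most `β_b / b`. -/
theorem stmt2 (n b d : ℕ) (hn : 2 ≤ n) (hb1 : 1 ≤ b) (hbn : b ≤ n)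
    (x : Fin n → EuclideanSpace ℝ (Fin d)) (y : Fin n → ℝ)
    (hy : ∀ i, y i = 1 ∨ y i = -1) (hx : ∀ i, ‖x i‖ ≤ 1)
    (X : Matrix (Fin d) (Fin n) ℝ) (hX : ∀ i j, X j i = x i j)
    (σ2 : ℝ) (hσl : 1 / (n : ℝ) ≤ σ2) (hσu : σ2 ≤ 1)
    (hspec : (1 / (n : ℝ)) *
        ‖LinearMap.toContinuousLinearMap (Matrix.toEuclideanLin X)‖ ^ 2 ≤ σ2)
    (w : EuclideanSpace ℝ (Fin d)) :
    (∑ A ∈ Finset.powersetCard b (Finset.univ : Finset (Fin n)),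
        ‖(-(1 / (b : ℝ))) • ∑ i ∈ A,
            (if y i * (inner ℝ w (x i) : ℝ) < 1 then (1 : ℝ) else 0) • (y i • x i)‖ ^ 2)
      / (n.choose b : ℝ)
    ≤ (1 + ((b : ℝ) - 1) * ((n : ℝ) * σ2 - 1) / ((n : ℝ) - 1)) / (b : ℝ) :=
  stmt2_general n b d hn hb1 hbn x y hy hx X hX σ2 hspec w
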